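/- arXiv:1309.3193 — 6 statements merged into one kernel-verified Lean document; each statement's English description precedes it below -/
import Mathlib

section
/- Let S be a finite set of points (stations) in ℝ^d, let P > 0 be a common transmission power, N ≥ 0 the noise, α > 0 the path-loss exponent, and β ≥ 1 the threshold. If a point p ∉ S satisfies SINR(s_i, p) = (P · d(s_i,p)^{-α}) / (Σ_{j≠i} P · d(s_j,p)^{-α} + N) ≥ β, then d(s_i, p) ≤ d(s_j, p) for every s_j ∈ S; i.e., the reception zone of s_i is contained in the Voronoi cell of s_i. -/
open Finset

lemma single_le_of_le_div_sum_add {ι : Type*} {s : Finset ι} {f : ι → ℝ} {a N β : ℝ}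
    (hf : ∀ k ∈ s, 0 ≤ f k) (hN : 0 ≤ N) (hβ : 1 ≤ β)
    (h : β ≤ a / (∑ k ∈ s, f k + N)) {j : ι} (hj : j ∈ s) : f j ≤ a := by
  have hfj : f j ≤ ∑ k ∈ s, f k + N := by
    linarith [Finset.single_le_sum hf hj]
  have hD : 0 < ∑ k ∈ s, f k + N := by
    refine (add_nonneg (Finset.sum_nonneg hf) hN).lt_of_ne' fun hD => ?_
    rw [hD, div_zero] at h
    linarith
  have hβD := (le_div_iff₀ hD).mp h
  nlinarith

theorem stmt0_general {d n : ℕ} (s : Fin n → EuclideanSpace ℝ (Fin d))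
    (P N α β : ℝ) (hP : 0 < P) (hN : 0 ≤ N)
    (hα : 0 < α) (hβ : 1 ≤ β) (p : EuclideanSpace ℝ (Fin d))
    (hp : ∀ j, p ≠ s j) (i : Fin n)
    (hsinr : β ≤ P * dist (s i) p ^ (-α) /
      ((∑ j ∈ Finset.univ.filter (fun j => j ≠ i), P * dist (s j) p ^ (-α)) + N)) :
    ∀ j, dist (s i) p ≤ dist (s j) p := by
  intro j
  rcases eq_or_ne j i with rfl | hji
  · exact le_rfl
  have hdist : ∀ k, 0 < dist (s k) p := fun k => dist_pos.mpr (hp k).symm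
  have hpow : P * dist (s j) p ^ (-α) ≤ P * dist (s i) p ^ (-α) :=
    single_le_of_le_div_sum_add (fun k _ => by positivity) hN hβ hsinr (by simpa using hji)
  exact (Real.rpow_le_rpow_iff_of_neg (hdist j) (hdist i) (neg_neg_of_pos hα)).mp
    (le_of_mul_le_mul_left hpow hP)

/-- Uniform-power reception zones are contained in Voronoi cells: if `p ∉ S` and
`SINR(s i, p) ≥ β` with `β ≥ 1`, then `s i` is a closest station to `p`. -/
theorem stmt0 {d n : ℕ} (hn : 2 ≤ n) (s : Fin n → EuclideanSpace ℝ (Fin d))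
    (hinj : Function.Injective s) (P N α β : ℝ) (hP : 0 < P) (hN : 0 ≤ N)
    (hα : 0 < α) (hβ : 1 ≤ β) (p : EuclideanSpace ℝ (Fin d))
    (hp : ∀ j, p ≠ s j) (i : Fin n)
    (hsinr : β ≤ P * dist (s i) p ^ (-α) /
      ((∑ j ∈ Finset.univ.filter (fun j => j ≠ i), P * dist (s j) p ^ (-α)) + N)) :
    ∀ j, dist (s i) p ≤ dist (s j) p :=
  stmt0_general s P N α β hP hN hα hβ p hp i hsinr
end

section
/- Separation of ordered Voronoi regions: let S ⊂ ℝ^d be finite and let (s_{i_1},…,s_{i_k}), (s_{j_1},…,s_{j_m}) be two ordered tuples of distinct points of S with k ≤ m such that the first tuple is not a prefix of the second. Then there exist two points s, s' ∈ S such that the bisector hyperplane HP(s,s') = {p : d(p,s) = d(p,s')} separates the two ordered Voronoi regions: one region lies in {p : d(p,s) ≤ d(p,s')} and the other in {p : d(p,s') ≤ d(p,s)}. In particular, the interiors of the two regions are disjoint. -/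
/-!
Let `j` be the first index where the two tuples differ, `a = s j` and `b = t j`. On the
region of `s`, the point `s j` is the nearest among all points of `S` except `s 0, …, s (j-1)`;
these coincide with `t 0, …, t (j-1)`, so by injectivity of `t` they do not include `b`, hence
`d(p, a) ≤ d(p, b)`. Symmetrically `d(p, b) ≤ d(p, a)` on the region of `t`. Two sets on
opposite closed sides of the bisector of `a ≠ b` have disjoint interiors, because the bisector
is a proper affine subspace and so has empty interior.
-/

/-- The ordered order-k Voronoi region of a tuple `s` with respect to `S`. -/
def vorOrd {d k : ℕ} (S : Finset (EuclideanSpace ℝ (Fin d)))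
    (s : Fin (k + 1) → EuclideanSpace ℝ (Fin d)) : Set (EuclideanSpace ℝ (Fin d)) :=
  {p | (∀ j : Fin k, dist p (s j.castSucc) ≤ dist p (s j.succ)) ∧
    ∀ t ∈ S, t ∉ Set.range s → dist p (s (Fin.last k)) ≤ dist p t}

open AffineSubspace

section PerpBisector

variable {V P : Type*} [NormedAddCommGroup V] [InnerProductSpace ℝ V] [MetricSpace P]

theorem interior_perpBisector [NormedAddTorsor V P] {a b : P} (hab : a ≠ b) :
    interior (perpBisector a b : Set P) = ∅ := by
  by_contra h
  refine hab (perpBisector_eq_top.1 (top_unique ?_))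
  calc ⊤ = affineSpan ℝ (interior (perpBisector a b : Set P)) :=
        (isOpen_interior.affineSpan_eq_top (Set.nonempty_iff_ne_empty.2 h)).symm
    _ ≤ affineSpan ℝ (perpBisector a b : Set P) := affineSpan_mono _ interior_subset
    _ = perpBisector a b := affineSpan_coe _

theorem interior_inter_interior_eq_empty_of_subset_dist_le [NormedAddTorsor V P]
    {A B : Set P} {a b : P} (hab : a ≠ b)
    (hA : A ⊆ {p | dist p a ≤ dist p b}) (hB : B ⊆ {p | dist p b ≤ dist p a}) :
    interior A ∩ interior B = ∅ := by
  rw [← interior_inter, ← Set.subset_empty_iff, ← interior_perpBisector hab]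
  exact interior_mono fun p hp => mem_perpBisector_iff_dist_eq.2 (le_antisymm (hA hp.1) (hB hp.2))

end PerpBisector

section VorOrd

variable {d k : ℕ} {S : Finset (EuclideanSpace ℝ (Fin d))}
  {s : Fin (k + 1) → EuclideanSpace ℝ (Fin d)} {p : EuclideanSpace ℝ (Fin d)}

theorem monotone_dist_of_mem_vorOrd (hp : p ∈ vorOrd S s) : Monotone fun i => dist p (s i) :=
  Fin.monotone_iff_le_succ.2 hp.1

theorem dist_le_of_mem_vorOrd (hp : p ∈ vorOrd S s) {x : EuclideanSpace ℝ (Fin d)} (hx : x ∈ S)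
    {i : Fin (k + 1)} (hi : ∀ l < i, s l ≠ x) : dist p (s i) ≤ dist p x := by
  by_cases hxs : x ∈ Set.range s
  · obtain ⟨l, rfl⟩ := hxs
    exact monotone_dist_of_mem_vorOrd hp (not_lt.1 fun hl => hi l hl rfl)
  · exact (monotone_dist_of_mem_vorOrd hp (Fin.le_last i)).trans (hp.2 x hx hxs)

end VorOrd

/-- Separation of ordered Voronoi regions: if `(s_0,…,s_k)` is not a prefix of
`(t_0,…,t_m)` (with `k ≤ m`), then some bisector hyperplane of two distinct points of
`S` separates the two ordered Voronoi regions; in particular their interiors are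
disjoint. -/
theorem stmt6 {d k m : ℕ} (S : Finset (EuclideanSpace ℝ (Fin d)))
    (s : Fin (k + 1) → EuclideanSpace ℝ (Fin d))
    (t : Fin (m + 1) → EuclideanSpace ℝ (Fin d)) (hkm : k ≤ m)
    (hsm : ∀ j, s j ∈ S) (htm : ∀ j, t j ∈ S)
    (hsi : Function.Injective s) (hti : Function.Injective t)
    (hpre : ¬ ∀ j : Fin (k + 1), s j = t (Fin.castLE (Nat.succ_le_succ hkm) j)) :
    ∃ a ∈ S, ∃ b ∈ S, a ≠ b ∧
      vorOrd S s ⊆ {p | dist p a ≤ dist p b} ∧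
      vorOrd S t ⊆ {p | dist p b ≤ dist p a} ∧
      interior (vorOrd S s) ∩ interior (vorOrd S t) = ∅ := by
  set ι := Fin.castLE (Nat.succ_le_succ hkm)
  push Not at hpre
  obtain ⟨j, hj, hmin⟩ := wellFounded_lt.has_min {j | s j ≠ t (ι j)} hpre
  have hagree : ∀ l < j, s l = t (ι l) := fun l hl => not_not.1 fun h => hmin l h hl
  have hA : vorOrd S s ⊆ {p | dist p (s j) ≤ dist p (t (ι j))} := fun p hp =>
    dist_le_of_mem_vorOrd hp (htm _) fun l hl h =>
      hl.ne (Fin.castLE_injective _ (hti ((hagree l hl).symm.trans h)))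
  have hB : vorOrd S t ⊆ {p | dist p (t (ι j)) ≤ dist p (s j)} := by
    intro p hp
    refine dist_le_of_mem_vorOrd hp (hsm _) fun l' hl' h => ?_
    obtain ⟨l, rfl⟩ : l' ∈ Set.range ι := by
      rw [Fin.range_castLE]; exact (Fin.lt_def.1 hl').trans j.isLt
    exact hl'.ne (congrArg ι (hsi ((hagree l hl').trans h)))
  exact ⟨s j, hsm j, t (ι j), htm _, hj, hA, hB,
    interior_inter_interior_eq_empty_of_subset_dist_le hj hA hB⟩
end

section
/- SIC reception regions are contained in ordered Voronoi regions: with uniform powers, β ≥ 1, and noise N ≥ 0, the region H(s_{i_1},…,s_{i_k}) of points that successfully decode s_{i_k} after successively canceling s_{i_1},…,s_{i_{k−1}} (i.e., points p such that for each j ≤ k, SINR of s_{i_j} at p in the network restricted to S ∖ {s_{i_1},…,s_{i_{j−1}}} is at least β) is contained in the ordered order-k Voronoi region Vor(s_{i_1},…,s_{i_k}). -/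
open Finset
open scoped Classical

/-! A receiver that decodes a station with SINR at least `β ≥ 1` receives it at least as
strongly as the total interference, hence at least as strongly as any single interferer;
since the received power `r ^ (-α)` is strictly decreasing in the distance `r`, the decoded
station is the nearest of the stations still present. Applying this at each stage of the
cancellation gives the ordering of the first `k + 1` distances, and at the last stage the
comparison with every station outside the tuple. -/

lemma le_of_one_le_le_div_sum_add {ι : Type*} {T : Finset ι} {f : ι → ℝ} {a N β : ℝ}
    (hf : ∀ i ∈ T, 0 ≤ f i) (hN : 0 ≤ N) (hβ : 1 ≤ β) (h : β ≤ a / (∑ i ∈ T, f i + N))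
    {i : ι} (hi : i ∈ T) : f i ≤ a := by
  have hfi_le : f i ≤ ∑ j ∈ T, f j + N :=
    le_add_of_le_of_nonneg (single_le_sum hf hi) hN
  have hpos : 0 < ∑ j ∈ T, f j + N := by
    refine (add_nonneg (sum_nonneg hf) hN).lt_of_ne' fun h0 => ?_
    rw [h0, div_zero] at h
    linarith
  calc f i ≤ ∑ j ∈ T, f j + N := hfi_le
    _ ≤ β * (∑ j ∈ T, f j + N) := le_mul_of_one_le_left hpos.le hβ
    _ ≤ a := (le_div_iff₀ hpos).mp h

lemma dist_le_of_le_sinr {X : Type*} [MetricSpace X] {T : Finset X} {x u p : X} {N α β : ℝ}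
    (hN : 0 ≤ N) (hα : 0 < α) (hβ : 1 ≤ β) (hxp : x ≠ p) (hpT : p ∉ T)
    (h : β ≤ dist x p ^ (-α) / (∑ v ∈ T, dist v p ^ (-α) + N)) (hu : u ∈ T) :
    dist p x ≤ dist p u := by
  have hpow : dist u p ^ (-α) ≤ dist x p ^ (-α) :=
    le_of_one_le_le_div_sum_add (fun v _ => Real.rpow_nonneg dist_nonneg _) hN hβ h hu
  have hup : 0 < dist u p := dist_pos.mpr fun hup => hpT (hup ▸ hu)
  rw [dist_comm p x, dist_comm p u]
  exact (Real.rpow_le_rpow_iff_of_neg hup (dist_pos.mpr hxp) (neg_lt_zero.mpr hα)).mp hpow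

/-- SIC reception regions are contained in ordered Voronoi regions: with uniform
powers, `β ≥ 1` and noise `N ≥ 0`, a point `p ∉ S` that successively decodes
`s 0, …, s k` (each time with SINR at least `β` in the network restricted to the
not-yet-cancelled stations) lies in the ordered order-k Voronoi region of the tuple. -/
theorem stmt7 {d k : ℕ} (S : Finset (EuclideanSpace ℝ (Fin d)))
    (s : Fin (k + 1) → EuclideanSpace ℝ (Fin d)) (hmem : ∀ j, s j ∈ S)
    (hinj : Function.Injective s) (N α β : ℝ) (hN : 0 ≤ N) (hα : 0 < α) (hβ : 1 ≤ β)
    (p : EuclideanSpace ℝ (Fin d)) (hp : p ∉ (S : Set (EuclideanSpace ℝ (Fin d))))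
    (hdec : ∀ j : Fin (k + 1), β ≤ dist (s j) p ^ (-α) /
      ((∑ u ∈ (S.filter fun u => ∀ l, l < j → u ≠ s l).erase (s j),
        dist u p ^ (-α)) + N)) :
    (∀ j : Fin k, dist p (s j.castSucc) ≤ dist p (s j.succ)) ∧
    ∀ t ∈ S, t ∉ Set.range s → dist p (s (Fin.last k)) ≤ dist p t := by
  have nearest : ∀ j, ∀ u ∈ (S.filter fun u => ∀ l, l < j → u ≠ s l).erase (s j),
      dist p (s j) ≤ dist p u := fun j _ hu =>
    dist_le_of_le_sinr hN hα hβ (fun h => hp (h ▸ hmem j))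
      (fun h => hp (mem_filter.mp (mem_of_mem_erase h)).1) (hdec j) hu
  refine ⟨fun j => nearest _ _ ?_, fun t htS htr => nearest _ _ ?_⟩
  · have hlt := Fin.castSucc_lt_succ (i := j)
    refine mem_erase.mpr ⟨fun h => hlt.ne' (hinj h), mem_filter.mpr ⟨hmem _, ?_⟩⟩
    rintro l hl h
    exact lt_asymm hl (hinj h ▸ hlt)
  · exact mem_erase.mpr ⟨fun h => htr ⟨_, h.symm⟩,
      mem_filter.mpr ⟨htS, fun l _ h => htr ⟨l, h.symm⟩⟩⟩
end

section
/- Compactness gap: with uniform powers, β > 1, noise N ≥ 0, and path-loss α > 0, if a point p can decode station s_i under successive interference cancellation and s_j is a station farther from p than s_i that was not canceled before s_i, then d(s_j, p) ≥ β^{1/α} · d(s_i, p). -/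
open Finset

/-! The station `sⱼ` is one of the interferers, so `SINR ≥ β` forces
`β · d(sⱼ,p)^(-α) ≤ d(sᵢ,p)^(-α)`, i.e. `β ≤ (d(sⱼ,p) / d(sᵢ,p))^α`; take `α`-th roots. -/

theorem mul_le_of_le_div_sum_add {ι : Type*} {T : Finset ι} {f : ι → ℝ} {j : ι} {c β N : ℝ}
    (hf : ∀ i ∈ T, 0 ≤ f i) (hj : j ∈ T) (hfj : 0 < f j) (hN : 0 ≤ N) (hβ : 0 ≤ β)
    (h : β ≤ c / (∑ i ∈ T, f i + N)) : β * f j ≤ c := by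
  have hfj_le : f j ≤ ∑ i ∈ T, f i + N := by
    linarith [single_le_sum hf hj]
  calc β * f j ≤ β * (∑ i ∈ T, f i + N) := mul_le_mul_of_nonneg_left hfj_le hβ
    _ ≤ c := (le_div_iff₀ (hfj.trans_le hfj_le)).mp h

theorem rpow_one_div_mul_le_of_mul_rpow_neg_le {a b α β : ℝ} (ha : 0 < a) (hb : 0 < b)
    (hα : 0 < α) (hβ : 0 ≤ β) (h : β * b ^ (-α) ≤ a ^ (-α)) : β ^ (1 / α) * a ≤ b := by
  have hβ_le : β ≤ (b / a) ^ α := by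
    rw [Real.rpow_neg hb.le, Real.rpow_neg ha.le, ← div_eq_mul_inv,
      div_le_iff₀ (by positivity)] at h
    rwa [Real.div_rpow hb.le ha.le, div_eq_inv_mul]
  have hroot : β ^ (1 / α) ≤ b / a := by
    rwa [one_div, Real.rpow_inv_le_iff_of_pos hβ (by positivity) hα]
  exact (le_div_iff₀ ha).mp hroot

theorem stmt8_general {d : ℕ} (N α β : ℝ) (hN : 0 ≤ N) (hα : 0 < α) (hβ : 1 < β)
    (T : Finset (EuclideanSpace ℝ (Fin d))) (si sj p : EuclideanSpace ℝ (Fin d))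
    (hsjT : sj ∈ T) (hpi : 0 < dist si p)
    (hfar : dist si p < dist sj p)
    (hsinr : β ≤ dist si p ^ (-α) / ((∑ t ∈ T, dist t p ^ (-α)) + N)) :
    β ^ (1 / α) * dist si p ≤ dist sj p := by
  have hsj : 0 < dist sj p := hpi.trans hfar
  have hβ₀ : 0 ≤ β := zero_le_one.trans hβ.le
  refine rpow_one_div_mul_le_of_mul_rpow_neg_le hpi hsj hα hβ₀ ?_
  exact mul_le_of_le_div_sum_add (f := fun t => dist t p ^ (-α)) (fun t _ => by positivity)
    hsjT (by positivity) hN hβ₀ hsinr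

/-- Compactness gap: with uniform powers, `β > 1`, noise `N ≥ 0` and path loss
`α > 0`, if point `p` decodes station `sᵢ` against an interference set `T`
containing the farther, not-yet-cancelled station `sⱼ`, then
`dist sⱼ p ≥ β^(1/α) · dist sᵢ p`. -/
theorem stmt8 {d : ℕ} (N α β : ℝ) (hN : 0 ≤ N) (hα : 0 < α) (hβ : 1 < β)
    (T : Finset (EuclideanSpace ℝ (Fin d))) (si sj p : EuclideanSpace ℝ (Fin d))
    (hsiT : si ∉ T) (hsjT : sj ∈ T) (hpi : 0 < dist si p)
    (hfar : dist si p < dist sj p)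
    (hsinr : β ≤ dist si p ^ (-α) / ((∑ t ∈ T, dist t p ^ (-α)) + N)) :
    β ^ (1 / α) * dist si p ≤ dist sj p :=
  stmt8_general N α β hN hα hβ T si sj p hsjT hpi hfar hsinr
end

section
/- Arithmetic core of the one-cell-per-contributor lemma: let C ≥ 4.2 and c_2, c_3 ≥ C be real numbers. Suppose points s*_1, s*_2, s*_3, p, q in a metric space satisfy d(s*_1,p) = 1, d(s*_2,p) = c_2, d(s*_3,p) = c_2·c_3, and d(s*_3,q) < d(s*_2,q). Then d(s*_2,q)/d(s*_1,q) < C, i.e., q is at distance from s*_2 less than C times its distance from s*_1. -/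
/-!
Since `s₃` is closer to `q` than `s₂`, the triangle inequality through `q` forces `q` far from `p`:
`c₂ c₃ < c₂ + 2 d(p, q)`. Seen from that far away, `s₁` and `s₂` (at distances `1` and `c₂` from `p`)
look almost equally distant, and for `c₂, c₃ ≥ C ≥ 4.2` the distortion is smaller than `C`.
-/

section Metric

variable {X : Type*} [PseudoMetricSpace X]

lemma dist_lt_dist_add_two_mul_dist_of_dist_lt {a b p q : X} (h : dist a q < dist b q) :
    dist a p < dist b p + 2 * dist p q := by
  have hap := dist_triangle a q p
  have hbq := dist_triangle b p q
  rw [dist_comm q p] at hap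
  linarith

lemma dist_lt_mul_dist_of_far {C : ℝ} (hC : 0 ≤ C) {a b p q : X}
    (hfar : dist a p + C * dist b p < (C - 1) * dist p q) :
    dist a q < C * dist b q := by
  have haq := dist_triangle a p q
  have hbq : dist p q - dist b p ≤ dist b q := by
    linarith [dist_triangle p b q, dist_comm p b]
  linarith [mul_le_mul_of_nonneg_left hbq hC]

end Metric

lemma add_lt_sub_one_mul_of_mul_sub_lt_two_mul {C c₂ c₃ D : ℝ}
    (hC : (4.2 : ℝ) ≤ C) (h₂ : C ≤ c₂) (h₃ : C ≤ c₃) (hD : c₂ * c₃ - c₂ < 2 * D) :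
    c₂ + C < (C - 1) * D := by
  have hC₁ : 0 < C - 1 := by linarith
  have hsq : 4 ≤ (C - 1) * (C - 1) := by nlinarith
  calc c₂ + C ≤ (C - 1) * (c₂ * (C - 1) / 2) := by nlinarith
    _ ≤ (C - 1) * (c₂ * (c₃ - 1) / 2) := by gcongr; linarith
    _ < (C - 1) * D := by gcongr; linarith

/-- Arithmetic core of the one-cell-per-contributor lemma: for `C ≥ 4.2`,
`c₂, c₃ ≥ C`, and points with `d(s₁*,p) = 1`, `d(s₂*,p) = c₂`, `d(s₃*,p) = c₂·c₃`,
if `d(s₃*,q) < d(s₂*,q)` then `d(s₂*,q)/d(s₁*,q) < C`. -/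
theorem stmt9 {X : Type*} [MetricSpace X] (C c₂ c₃ : ℝ)
    (hC : (4.2 : ℝ) ≤ C) (h₂ : C ≤ c₂) (h₃ : C ≤ c₃)
    (s₁ s₂ s₃ p q : X)
    (h1p : dist s₁ p = 1) (h2p : dist s₂ p = c₂) (h3p : dist s₃ p = c₂ * c₃)
    (hq : dist s₃ q < dist s₂ q) :
    dist s₂ q / dist s₁ q < C := by
  have hpq : c₂ * c₃ - c₂ < 2 * dist p q := by
    have := dist_lt_dist_add_two_mul_dist_of_dist_lt (p := p) hq
    rw [h3p, h2p] at this
    linarith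
  have hlt : dist s₂ q < C * dist s₁ q := by
    refine dist_lt_mul_dist_of_far (p := p) (by linarith) ?_
    rw [h2p, h1p, mul_one]
    exact add_lt_sub_one_mul_of_mul_sub_lt_two_mul hC h₂ h₃ hpq
  have hs₁ : 0 < dist s₁ q := pos_of_mul_pos_right (dist_nonneg.trans_lt hlt) (by linarith)
  rwa [div_lt_iff₀ hs₁]
end

section
/- Disjointness of SIC cells via Voronoi separation: let (s_{i_1},…,s_{i_k}) and (s_{j_1},…,s_{j_m}) be two distinct ordered tuples of distinct stations, neither a prefix of the other, both ending with the same station s_1, in a uniform-power network with β ≥ 1. Then the corresponding SIC reception regions H(s_{i_1},…,s_{i_k}) and H(s_{j_1},…,s_{j_m}) are disjoint. -/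
open Finset
open scoped Classical

/-- The SIC reception region of an ordered cancellation tuple `s` within station set
`S`: points outside `S` that successively decode `s 0, …, s k`, each time with SINR at
least `β` in the network restricted to the not-yet-cancelled stations. -/
noncomputable def sicRegion {d k : ℕ} (S : Finset (EuclideanSpace ℝ (Fin d)))
    (s : Fin (k + 1) → EuclideanSpace ℝ (Fin d)) (N α β : ℝ) :
    Set (EuclideanSpace ℝ (Fin d)) :=
  {p | p ∉ (S : Set (EuclideanSpace ℝ (Fin d))) ∧ ∀ j : Fin (k + 1),
    β ≤ dist (s j) p ^ (-α) /
      ((∑ u ∈ (S.filter fun u => ∀ l, l < j → u ≠ s l).erase (s j),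
        dist u p ^ (-α)) + N)}

/-!
Let `j` be the first step at which the two cancellation orders differ, with `a := s j ≠ b := t j`.
Up to step `j` both orders have cancelled the same stations, so at step `j` they face the same set
`R` of uncancelled stations. Since `β ≥ 1`, decoding `a` forces `a` to outweigh all other
stations of `R` plus the noise, and decoding `b` forces the same for `b`; both can hold only if
`N = 0` and `R = {a, b}`. The common last station lies in `R`, so it is `a` or `b`, which means
one tuple ends at step `j` while the other still has to decode its last station with no
interferer and no noise, where the SINR is `x / 0 = 0 < β`.
-/

variable {V : Type*}

noncomputable def uncancelled {ι : Type*} [LT ι] (S : Finset V) (s : ι → V) (j : ι) : Finset V :=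
  S.filter fun u => ∀ l, l < j → u ≠ s l

section uncancelled

variable {ι : Type*} [Preorder ι] {S : Finset V} {s : ι → V}

theorem uncancelled_subset (j : ι) : uncancelled S s j ⊆ S :=
  filter_subset _ _

theorem mem_uncancelled_self (hs : Function.Injective s) {i j : ι} (hi : s i ∈ S) (hji : j ≤ i) :
    s i ∈ uncancelled S s j :=
  mem_filter.2 ⟨hi, fun _ hl h => (hl.trans_le hji).ne (hs h).symm⟩

theorem uncancelled_subset_erase_of_lt [DecidableEq V] {i j : ι} (hji : j < i) :
    uncancelled S s i ⊆ (uncancelled S s j).erase (s j) := fun u hu => by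
  obtain ⟨huS, hu⟩ := mem_filter.1 hu
  exact mem_erase.2 ⟨hu j hji, mem_filter.2 ⟨huS, fun l hl => hu l (hl.trans hji)⟩⟩

end uncancelled

theorem uncancelled_castLE_eq {k m : ℕ} {S : Finset V} {s : Fin (k + 1) → V}
    {t : Fin (m + 1) → V} (h : k + 1 ≤ m + 1) {j : Fin (k + 1)}
    (hst : ∀ l < j, s l = t (Fin.castLE h l)) :
    uncancelled S t (Fin.castLE h j) = uncancelled S s j := by
  ext u
  simp only [uncancelled, mem_filter, and_congr_right_iff]
  refine fun _ => ⟨fun hu l hl => hst l hl ▸ hu _ ((Fin.castLE_lt_castLE_iff h).2 hl),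
    fun hu l hl => ?_⟩
  have hlj : (l : ℕ) < j := hl
  have hl' : l = Fin.castLE h ⟨l, hlj.trans j.isLt⟩ := rfl
  rw [hl', ← hst _ hlj]
  exact hu _ hlj

theorem pos_and_le_of_one_le_le_div {β a b : ℝ} (hβ : 1 ≤ β) (ha : 0 ≤ a) (h : β ≤ a / b) :
    0 < b ∧ b ≤ a := by
  rcases one_le_div_iff.1 (hβ.trans h) with hb | ⟨hb, hab⟩
  · exact hb
  · exact absurd (ha.trans hab) hb.not_ge

theorem eq_zero_and_subset_pair_of_sum_erase_add_le [DecidableEq V] {R : Finset V} {w : V → ℝ}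
    {N : ℝ} {a b : V}
    (hw : ∀ u ∈ R, 0 < w u) (hN : 0 ≤ N) (ha : a ∈ R) (hb : b ∈ R) (hab : a ≠ b)
    (hadom : ∑ u ∈ R.erase a, w u + N ≤ w a) (hbdom : ∑ u ∈ R.erase b, w u + N ≤ w b) :
    N = 0 ∧ R ⊆ {a, b} := by
  set rest := ∑ u ∈ (R.erase a).erase b, w u
  have hrest : 0 ≤ rest :=
    sum_nonneg fun u hu => (hw u (mem_of_mem_erase (mem_of_mem_erase hu))).le
  have hsa : ∑ u ∈ R.erase a, w u = w b + rest :=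
    (add_sum_erase _ _ (mem_erase.2 ⟨hab.symm, hb⟩)).symm
  have hsb : ∑ u ∈ R.erase b, w u = w a + rest := by
    rw [← add_sum_erase _ _ (mem_erase.2 ⟨hab, ha⟩), erase_right_comm]
  have hrest0 : rest = 0 := by linarith
  refine ⟨by linarith, fun u hu => ?_⟩
  by_contra hnot
  simp only [mem_insert, mem_singleton, not_or] at hnot
  have hu' : u ∈ (R.erase a).erase b := mem_erase.2 ⟨hnot.2, mem_erase.2 ⟨hnot.1, hu⟩⟩
  exact (hw u hu).ne' ((sum_eq_zero_iff_of_nonneg fun v hv =>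
    (hw v (mem_of_mem_erase (mem_of_mem_erase hv))).le).1 hrest0 u hu')

section sicRegion

variable {d k : ℕ} {S : Finset (EuclideanSpace ℝ (Fin d))}
  {s : Fin (k + 1) → EuclideanSpace ℝ (Fin d)} {N α β : ℝ} {p : EuclideanSpace ℝ (Fin d)}

theorem rpow_dist_pos_of_mem_sicRegion (hp : p ∈ sicRegion S s N α β) {u} (hu : u ∈ S) :
    0 < dist u p ^ (-α) :=
  Real.rpow_pos_of_pos (dist_pos.2 <| by rintro rfl; exact hp.1 hu) _

theorem interference_add_noise_le_of_mem_sicRegion (hp : p ∈ sicRegion S s N α β) (hβ : 1 ≤ β)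
    (hs : ∀ j, s j ∈ S) (j : Fin (k + 1)) :
    0 < ∑ u ∈ (uncancelled S s j).erase (s j), dist u p ^ (-α) + N ∧
      ∑ u ∈ (uncancelled S s j).erase (s j), dist u p ^ (-α) + N ≤ dist (s j) p ^ (-α) :=
  pos_and_le_of_one_le_le_div hβ (rpow_dist_pos_of_mem_sicRegion hp (hs j)).le <| by
    -- `sicRegion` decides its filter with the bounded-`∀` instance of `Fin`
    convert hp.2 j using 6
    unfold uncancelled
    congr!

/-- With `x / 0 = 0`, a station decoded alone in a noiseless network has SINR `0`, not `∞`. -/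
theorem interference_nonempty_of_mem_sicRegion (hp : p ∈ sicRegion S s N α β) (hβ : 1 ≤ β)
    (hs : ∀ j, s j ∈ S) (hN : N ≤ 0) (j : Fin (k + 1)) :
    ((uncancelled S s j).erase (s j)).Nonempty :=
  nonempty_of_sum_ne_zero (f := fun u => dist u p ^ (-α)) fun _ => by
    linarith [(interference_add_noise_le_of_mem_sicRegion hp hβ hs j).1]

end sicRegion

theorem disjoint_sicRegion_of_le {d k m : ℕ} {S : Finset (EuclideanSpace ℝ (Fin d))}
    {s : Fin (k + 1) → EuclideanSpace ℝ (Fin d)} {t : Fin (m + 1) → EuclideanSpace ℝ (Fin d)}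
    (hsm : ∀ j, s j ∈ S) (htm : ∀ j, t j ∈ S)
    (hsi : Function.Injective s) (hti : Function.Injective t)
    (hlast : s (Fin.last k) = t (Fin.last m)) (hkm : k + 1 ≤ m + 1)
    (hnp : ∃ j, s j ≠ t (Fin.castLE hkm j)) {N α β : ℝ} (hN : 0 ≤ N) (hβ : 1 ≤ β) :
    Disjoint (sicRegion S s N α β) (sicRegion S t N α β) := by
  refine Set.disjoint_left.2 fun p hps hpt => ?_
  obtain ⟨j, hj, hmin⟩ :=
    WellFounded.has_min wellFounded_lt {j | s j ≠ t (Fin.castLE hkm j)} hnp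
  have hR : uncancelled S t (Fin.castLE hkm j) = uncancelled S s j :=
    uncancelled_castLE_eq hkm fun l hl => not_not.1 fun hne => hmin l hne hl
  have ha := mem_uncancelled_self hsi (hsm j) le_rfl
  have hb := hR ▸ mem_uncancelled_self hti (htm (Fin.castLE hkm j)) le_rfl
  have hbdom := (interference_add_noise_le_of_mem_sicRegion hpt hβ htm (Fin.castLE hkm j)).2
  rw [hR] at hbdom
  obtain ⟨hN0, hRab⟩ := eq_zero_and_subset_pair_of_sum_erase_add_le
    (fun u hu => rpow_dist_pos_of_mem_sicRegion hps (uncancelled_subset j hu)) hN ha hb hj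
    (interference_add_noise_le_of_mem_sicRegion hps hβ hsm j).2 hbdom
  rcases mem_insert.1 (hRab (mem_uncancelled_self hsi (hsm (Fin.last k)) j.le_last))
    with hsa | htb
  · -- `s` ends at step `j`, leaving `t` to decode `t (last m) = s j` with nothing else left
    have hjk : j = Fin.last k := (hsi hsa).symm
    have hlt : Fin.castLE hkm j < Fin.last m :=
      (Fin.le_last _).lt_of_ne fun heq => hj (by rw [heq, ← hlast, hjk])
    obtain ⟨u, hu⟩ := interference_nonempty_of_mem_sicRegion hpt hβ htm hN0.le (Fin.last m)
    obtain ⟨hu_ne, hu⟩ := mem_erase.1 hu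
    obtain ⟨hu_ne_b, huR⟩ := mem_erase.1 (hR ▸ uncancelled_subset_erase_of_lt hlt hu)
    rcases mem_insert.1 (hRab huR) with hua | hub
    · exact hu_ne (by rw [hua, hjk, hlast])
    · exact hu_ne_b (mem_singleton.1 hub)
  · have hjm : Fin.castLE hkm j = Fin.last m := hti (by rw [← mem_singleton.1 htb, hlast])
    have hjk : j = Fin.last k := Fin.ext <| by
      have := congrArg Fin.val hjm
      simp only [Fin.val_castLE, Fin.val_last] at this ⊢
      omega
    exact hj (by rw [hjm, ← hlast, hjk])

theorem stmt14_general {d k m : ℕ} (S : Finset (EuclideanSpace ℝ (Fin d)))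
    (s : Fin (k + 1) → EuclideanSpace ℝ (Fin d))
    (t : Fin (m + 1) → EuclideanSpace ℝ (Fin d))
    (hsm : ∀ j, s j ∈ S) (htm : ∀ j, t j ∈ S)
    (hsi : Function.Injective s) (hti : Function.Injective t)
    (hlast : s (Fin.last k) = t (Fin.last m))
    (hnp₁ : ∀ h : k ≤ m, ∃ j : Fin (k + 1),
      s j ≠ t (Fin.castLE (Nat.succ_le_succ h) j))
    (hnp₂ : ∀ h : m ≤ k, ∃ j : Fin (m + 1),
      t j ≠ s (Fin.castLE (Nat.succ_le_succ h) j))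
    (N α β : ℝ) (hN : 0 ≤ N) (hβ : 1 ≤ β) :
    sicRegion S s N α β ∩ sicRegion S t N α β = ∅ := by
  rw [← Set.disjoint_iff_inter_eq_empty]
  rcases le_total k m with h | h
  · exact disjoint_sicRegion_of_le hsm htm hsi hti hlast _ (hnp₁ h) hN hβ
  · exact (disjoint_sicRegion_of_le htm hsm hti hsi hlast.symm _ (hnp₂ h) hN hβ).symm

/-- Disjointness of SIC cells: two distinct ordered cancellation tuples, neither a
prefix of the other, both ending with the same station, have disjoint SIC reception
regions (uniform powers, `β ≥ 1`). -/
theorem stmt14 {d k m : ℕ} (S : Finset (EuclideanSpace ℝ (Fin d)))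
    (s : Fin (k + 1) → EuclideanSpace ℝ (Fin d))
    (t : Fin (m + 1) → EuclideanSpace ℝ (Fin d))
    (hsm : ∀ j, s j ∈ S) (htm : ∀ j, t j ∈ S)
    (hsi : Function.Injective s) (hti : Function.Injective t)
    (hlast : s (Fin.last k) = t (Fin.last m))
    (hnp₁ : ∀ h : k ≤ m, ∃ j : Fin (k + 1),
      s j ≠ t (Fin.castLE (Nat.succ_le_succ h) j))
    (hnp₂ : ∀ h : m ≤ k, ∃ j : Fin (m + 1),
      t j ≠ s (Fin.castLE (Nat.succ_le_succ h) j))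
    (N α β : ℝ) (hN : 0 ≤ N) (hα : 0 < α) (hβ : 1 ≤ β) :
    sicRegion S s N α β ∩ sicRegion S t N α β = ∅ :=
  stmt14_general S s t hsm htm hsi hti hlast hnp₁ hnp₂ N α β hN hβ
end
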